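/- (Validity of the multilayered bounds for the local controlled indirect effect.) Under the multilayered sample selection model with Assumption RCT, let R be a collection of constraints on response-type probability vectors, suppose the true vector (P(T=(d,d')))_{(d,d')} belongs to Θ_I(R), and suppose every Y_{z,d} takes values in [y_L, y_U] almost surely for fixed reals y_L ≤ y_U. Fix d, d' ∈ {1,…,K} with d ≠ d' and l ∈ {1,…,K}. Then: (a) if P(T=(l,d)) > 0, P(D=d | Z=1) > 0 and γ̲^{1,r}_{(l,d)} > 0, then E[F^{-1}_{Y|D=d,Z=1}(U) | U ≤ γ̲^{1,r}_{(l,d)}] − y_U ≤ LCIE(1, d, d' | (l,d)) ≤ E[F^{-1}_{Y|D=d,Z=1}(U) | U ≥ 1 − γ̲^{1,r}_{(l,d)}] − y_L; and (b) if P(T=(d,l)) > 0, P(D=d | Z=0) > 0 and γ̲^{0,r}_{(d,l)} > 0, then E[F^{-1}_{Y|D=d,Z=0}(U) | U ≤ γ̲^{0,r}_{(d,l)}] − y_U ≤ LCIE(0, d, d' | (d,l)) ≤ E[F^{-1}_{Y|D=d,Z=0}(U) | U ≥ 1 − γ̲^{0,r}_{(d,l)}] − y_L. -/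

import Mathlib

open MeasureTheory ProbabilityTheory

/-- Realized layer `D = D_1·Z + D_0·(1−Z)` (for `Z` valued in `{0,1}`). -/
def Dreal {Ω : Type*} (Z D0 D1 : Ω → ℕ) (ω : Ω) : ℕ :=
  D1 ω * Z ω + D0 ω * (1 - Z ω)

/-- Realized outcome `Y = Σ_{d=1}^K [Y_{1,d}·Z + Y_{0,d}·(1−Z)]·1{D=d}`. -/
noncomputable def Yreal {Ω : Type*} (K : ℕ) (Z D0 D1 : Ω → ℕ) (Y : ℕ → ℕ → Ω → ℝ)
    (ω : Ω) : ℝ :=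
  ∑ d ∈ Finset.Icc 1 K,
    (Y 1 d ω * (Z ω : ℝ) + Y 0 d ω * (1 - (Z ω : ℝ))) *
      (if Dreal Z D0 D1 ω = d then 1 else 0)

/-- Assumption RCT: the σ-algebra generated by the potential outcomes
`Y_{z,d}` (for `z ∈ {0,1}`, `d ∈ {1,…,K}`) together with `D_0, D_1` is
independent of (the σ-algebra generated by) `Z`. -/
def RCT {Ω : Type*} [MeasurableSpace Ω] (P : MeasureTheory.Measure Ω) (K : ℕ)
    (Y : ℕ → ℕ → Ω → ℝ) (D0 D1 Z : Ω → ℕ) : Prop :=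
  ProbabilityTheory.Indep
    ((⨆ z ∈ ({0, 1} : Set ℕ), ⨆ d ∈ Set.Icc 1 K, MeasurableSpace.comap (Y z d) inferInstance)
      ⊔ MeasurableSpace.comap D0 inferInstance ⊔ MeasurableSpace.comap D1 inferInstance)
    (MeasurableSpace.comap Z inferInstance) P

/-- CDF of a random variable `W` under a measure `μ`. -/
noncomputable def cdfOf {Ω : Type*} [MeasurableSpace Ω] (μ : MeasureTheory.Measure Ω)
    (W : Ω → ℝ) (w : ℝ) : ℝ :=
  (μ {ω | W ω ≤ w}).toReal

/-- Quantile function `F⁻¹(u) = inf {w : F(w) ≥ u}`. -/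
noncomputable def quantileFn (F : ℝ → ℝ) (u : ℝ) : ℝ := sInf {w | u ≤ F w}

/-- Lower truncated mean `E[F⁻¹(U) | U ≤ γ]` for `U` uniform on `[0,1]`,
written as `γ⁻¹ ∫_{(0,γ]} F⁻¹(u) du`. -/
noncomputable def lowerTrunc (F : ℝ → ℝ) (γ : ℝ) : ℝ :=
  γ⁻¹ * ∫ u in Set.Ioc (0 : ℝ) γ, quantileFn F u

/-- Upper truncated mean `E[F⁻¹(U) | U ≥ 1 − γ]` for `U` uniform on `[0,1]`,
written as `γ⁻¹ ∫_{[1−γ,1]} F⁻¹(u) du`. -/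
noncomputable def upperTrunc (F : ℝ → ℝ) (γ : ℝ) : ℝ :=
  γ⁻¹ * ∫ u in Set.Ico (1 - γ) (1 : ℝ), quantileFn F u

/-- Propensity score `P(D = d | Z = z)` as a real number. -/
noncomputable def propScore {Ω : Type*} [MeasurableSpace Ω] (P : MeasureTheory.Measure Ω)
    (Z D0 D1 : Ω → ℕ) (d z : ℕ) : ℝ :=
  ((P[|{ω | Z ω = z}]) {ω | Dreal Z D0 D1 ω = d}).toReal

/-- Identified set `Θ_I(R)` of response-type probability vectors: nonnegative
vectors on `{0,…,K}²` summing to one, matching both propensity-score margins,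
and satisfying the restrictions `R`. -/
def ThetaI {Ω : Type*} [MeasurableSpace Ω] (P : MeasureTheory.Measure Ω) (K : ℕ)
    (Z D0 D1 : Ω → ℕ) (R : (ℕ × ℕ → ℝ) → Prop) : Set (ℕ × ℕ → ℝ) :=
  {p | (∀ t ∈ Finset.range (K + 1) ×ˢ Finset.range (K + 1), 0 ≤ p t) ∧
       (∑ t ∈ Finset.range (K + 1) ×ˢ Finset.range (K + 1), p t = 1) ∧
       (∀ d ≤ K, propScore P Z D0 D1 d 1 = ∑ d' ∈ Finset.range (K + 1), p (d', d)) ∧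
       (∀ d ≤ K, propScore P Z D0 D1 d 0 = ∑ d' ∈ Finset.range (K + 1), p (d, d')) ∧
       R p}

/-- `p̲^r_t`: the infimum of `p t` over the identified set `Θ_I(R)`. -/
noncomputable def pbar {Ω : Type*} [MeasurableSpace Ω] (P : MeasureTheory.Measure Ω)
    (K : ℕ) (Z D0 D1 : Ω → ℕ) (R : (ℕ × ℕ → ℝ) → Prop) (t : ℕ × ℕ) : ℝ :=
  sInf ((fun p => p t) '' ThetaI P K Z D0 D1 R)

/-- The conditional CDF `F_{Y|D=d,Z=z}` of the realized outcome. -/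
noncomputable def FYcond {Ω : Type*} [MeasurableSpace Ω] (P : MeasureTheory.Measure Ω)
    (K : ℕ) (Z D0 D1 : Ω → ℕ) (Y : ℕ → ℕ → Ω → ℝ) (d z : ℕ) : ℝ → ℝ :=
  cdfOf (P[|{ω | Dreal Z D0 D1 ω = d ∧ Z ω = z}]) (Yreal K Z D0 D1 Y)

/-!
On the event `T = t, Z = z` the realized layer is `d`, so this event is a sub-population of the
cell `{D = d, Z = z}`, and by RCT the outcome `Y` on it is distributed as `Y_{z,d}` given
`T = t`. Its share of the cell is `P(T = t) / P(D = d | Z = z) ≥ γ̲`. Conditioning the cell law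
`μ` on a subset of mass at least `γ` gives a law `ν` with `γ ν ≤ μ`, and for any such `ν` the mean
of `W` lies between the lower and the upper `γ`-trimmed means of `μ ∘ W⁻¹` (Horowitz–Manski / Lee
bounds). Writing the mean of `W - y_L` and the two trimmed means by the layer-cake formula, this
reduces to the pointwise bounds `max (γ - F s) 0 ≤ γ ν(W > s) ≤ min γ (1 - F s)`, which hold because
`γ ν(W ≤ s) ≤ F s` and `γ ν(W > s) ≤ 1 - F s`. Subtracting the trivial bounds
`y_L ≤ E[Y_{z,d'} | T = t] ≤ y_U` gives the LCIE bounds.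
-/

open Set Filter Topology

lemma integrable_of_ae_mem_Icc {α : Type*} [MeasurableSpace α] {μ : Measure α}
    [IsFiniteMeasure μ] {f : α → ℝ} (hf : AEStronglyMeasurable f μ) {a b : ℝ}
    (hab : ∀ᵐ x ∂μ, f x ∈ Icc a b) : Integrable f μ :=
  .of_bound hf (max |a| |b|) <| by
    filter_upwards [hab] with x hx using abs_le_max_abs_abs hx.1 hx.2

lemma integral_mem_Icc_of_ae_mem_Icc {α : Type*} [MeasurableSpace α] {μ : Measure α}
    [IsProbabilityMeasure μ] {f : α → ℝ} (hf : AEStronglyMeasurable f μ) {a b : ℝ}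
    (hab : ∀ᵐ x ∂μ, f x ∈ Icc a b) : ∫ x, f x ∂μ ∈ Icc a b := by
  have hint := integrable_of_ae_mem_Icc hf hab
  constructor
  · simpa using integral_mono_ae (integrable_const a) hint (hab.mono fun _ h => h.1)
  · simpa using integral_mono_ae hint (integrable_const b) (hab.mono fun _ h => h.2)

section Quantile

variable {Ω : Type*} [MeasurableSpace Ω] {μ : Measure Ω} {W : Ω → ℝ} {yL yU : ℝ}

lemma monotone_cdfOf [IsFiniteMeasure μ] : Monotone (cdfOf μ W) := fun _ _ h =>
  ENNReal.toReal_mono (measure_ne_top _ _) (measure_mono fun _ hω => le_trans hω h)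

lemma cdfOf_eq_cdf_map [IsProbabilityMeasure μ] (hW : Measurable W) :
    cdfOf μ W = cdf (μ.map W) := by
  have := Measure.isProbabilityMeasure_map (μ := μ) hW.aemeasurable
  ext w
  rw [cdf_eq_real, map_measureReal_apply hW measurableSet_Iic]
  rfl

lemma cdfOf_eq_zero_of_lt (hbdd : ∀ᵐ ω ∂μ, W ω ∈ Icc yL yU) {w : ℝ} (hw : w < yL) :
    cdfOf μ W w = 0 := by
  rw [cdfOf, measure_eq_zero_iff_ae_notMem.2, ENNReal.toReal_zero]
  filter_upwards [hbdd] with ω hω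
  exact fun h => (h.trans_lt hw).not_ge hω.1

lemma cdfOf_eq_one_of_le [IsProbabilityMeasure μ] (hW : Measurable W)
    (hbdd : ∀ᵐ ω ∂μ, W ω ∈ Icc yL yU) {w : ℝ} (hw : yU ≤ w) : cdfOf μ W w = 1 := by
  have hall : ∀ᵐ ω ∂μ, W ω ≤ w := by filter_upwards [hbdd] with ω hω using hω.2.trans hw
  have hmeas : MeasurableSet {ω | W ω ≤ w} := hW measurableSet_Iic
  rw [cdfOf, (ae_iff_measure_eq hmeas.nullMeasurableSet).1 hall, measure_univ, ENNReal.toReal_one]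

variable [IsProbabilityMeasure μ] (hW : Measurable W) (hbdd : ∀ᵐ ω ∂μ, W ω ∈ Icc yL yU)
include hW hbdd

lemma quantileFn_le_iff {u : ℝ} (hu : u ∈ Ioc 0 1) (w : ℝ) :
    quantileFn (cdfOf μ W) u ≤ w ↔ u ≤ cdfOf μ W w := by
  have hne : yU ∈ {w | u ≤ cdfOf μ W w} := by
    simpa [cdfOf_eq_one_of_le hW hbdd le_rfl] using hu.2
  have hbdd_below : BddBelow {w | u ≤ cdfOf μ W w} := by
    refine ⟨yL, fun v (hv : u ≤ cdfOf μ W v) => not_lt.1 fun hlt => ?_⟩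
    rw [cdfOf_eq_zero_of_lt hbdd hlt] at hv
    exact hu.1.not_ge hv
  refine ⟨fun h => ?_, fun h => csInf_le hbdd_below h⟩
  have hright : Tendsto (cdfOf μ W) (𝓝[>] w) (𝓝 (cdfOf μ W w)) := by
    rw [cdfOf_eq_cdf_map hW]
    exact ((cdf (μ.map W)).right_continuous w).mono Ioi_subset_Ici_self
  refine ge_of_tendsto hright (eventually_nhdsWithin_of_forall fun v hv => ?_)
  obtain ⟨x, hx, hxv⟩ := (csInf_lt_iff hbdd_below ⟨yU, hne⟩).1 (h.trans_lt hv)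
  exact hx.trans (monotone_cdfOf hxv.le)

lemma quantileFn_mem_Icc {u : ℝ} (hu : u ∈ Ioc 0 1) : quantileFn (cdfOf μ W) u ∈ Icc yL yU := by
  refine ⟨not_lt.1 fun hlt => hu.1.not_ge ?_, (quantileFn_le_iff hW hbdd hu yU).2 ?_⟩
  · rw [← cdfOf_eq_zero_of_lt hbdd hlt]
    exact (quantileFn_le_iff hW hbdd hu _).1 le_rfl
  · rw [cdfOf_eq_one_of_le hW hbdd le_rfl]
    exact hu.2

lemma monotoneOn_quantileFn : MonotoneOn (quantileFn (cdfOf μ W)) (Ioc 0 1) :=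
  fun _ hu _ hv huv =>
    (quantileFn_le_iff hW hbdd hu _).2 (huv.trans ((quantileFn_le_iff hW hbdd hv _).1 le_rfl))

lemma setIntegral_quantileFn {S : Set ℝ} (hS : MeasurableSet S) (hS01 : S ⊆ Ioc 0 1) :
    ∫ u in S, quantileFn (cdfOf μ W) u =
      yL * volume.real S + ∫ t in Ioi 0, volume.real (S ∩ Ioi (cdfOf μ W (yL + t))) := by
  set Q := quantileFn (cdfOf μ W)
  have hQS : ∀ u ∈ S, Q u ∈ Icc yL yU := fun u hu => quantileFn_mem_Icc hW hbdd (hS01 hu)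
  have hfin : volume S ≠ ⊤ := ((measure_mono hS01).trans_lt measure_Ioc_lt_top).ne
  have := isFiniteMeasure_restrict.2 hfin
  have hQint : IntegrableOn Q S := integrable_of_ae_mem_Icc
    (aemeasurable_restrict_of_monotoneOn hS
      ((monotoneOn_quantileFn hW hbdd).mono hS01)).aestronglyMeasurable
    ((ae_restrict_iff' hS).2 (ae_of_all _ hQS))
  have hcake := Integrable.integral_eq_integral_meas_lt (f := fun u => Q u - yL)
    (hQint.sub (integrable_const yL))
    ((ae_restrict_iff' hS).2 (ae_of_all _ fun u hu => sub_nonneg.2 (hQS u hu).1))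
  rw [integral_sub hQint (integrable_const yL), setIntegral_const, smul_eq_mul,
    sub_eq_iff_eq_add'] at hcake
  rw [hcake, mul_comm]
  congr 1
  refine setIntegral_congr_fun measurableSet_Ioi fun t _ => ?_
  rw [measureReal_restrict_apply' hS]
  congr 1
  ext u
  simp only [mem_inter_iff, mem_ofPred_eq, mem_Ioi, and_comm (a := u ∈ S), and_congr_left_iff]
  intro hu
  rw [lt_sub_iff_add_lt', ← not_le, ← not_le, quantileFn_le_iff hW hbdd (hS01 hu)]

lemma lowerTrunc_cdfOf_eq {γ : ℝ} (hγ : γ ∈ Ioc 0 1) :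
    lowerTrunc (cdfOf μ W) γ = yL + γ⁻¹ * ∫ t in Ioi 0, max (γ - cdfOf μ W (yL + t)) 0 := by
  have hcdf_nonneg (t : ℝ) : 0 ≤ cdfOf μ W (yL + t) := ENNReal.toReal_nonneg
  rw [lowerTrunc, setIntegral_quantileFn hW hbdd measurableSet_Ioc (Ioc_subset_Ioc_right hγ.2),
    Real.volume_real_Ioc_of_le hγ.1.le]
  simp_rw [Ioc_inter_Ioi, max_eq_right (hcdf_nonneg _), Real.volume_real_Ioc]
  field_simp [hγ.1.ne']
  ring

lemma upperTrunc_cdfOf_eq {γ : ℝ} (hγ : γ ∈ Ioc 0 1) :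
    upperTrunc (cdfOf μ W) γ = yL + γ⁻¹ * ∫ t in Ioi 0, min γ (1 - cdfOf μ W (yL + t)) := by
  have hcdf_le_one (t : ℝ) : cdfOf μ W (yL + t) ≤ 1 := by
    rw [cdfOf_eq_cdf_map hW]
    exact cdf_le_one _ _
  have hvol (c : ℝ) (hc : c ≤ 1) : volume.real (Ioo (1 - γ) 1 ∩ Ioi c) = min γ (1 - c) := by
    rw [Ioo_inter_Ioi, Real.volume_real_Ioo]
    rcases le_total (1 - γ) c with h | h
    · rw [max_eq_right h, max_eq_left (by linarith), min_eq_right (by linarith)]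
    · rw [max_eq_left h, max_eq_left (by linarith [hγ.1]), min_eq_left (by linarith)]
      ring
  rw [upperTrunc, setIntegral_congr_set Ioo_ae_eq_Ico.symm,
    setIntegral_quantileFn hW hbdd measurableSet_Ioo
      (Ioo_subset_Ioc_self.trans (Ioc_subset_Ioc_left (by linarith [hγ.2]))),
    Real.volume_real_Ioo_of_le (by linarith [hγ.1])]
  simp_rw [hvol _ (hcdf_le_one _)]
  field_simp [hγ.1.ne']
  ring

end Quantile

lemma Antitone.integrableOn_Ioi_of_eq_zero {f : ℝ → ℝ} (hf : Antitone f) {a c : ℝ}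
    (hc : ∀ t, c < t → f t = 0) : IntegrableOn f (Ioi a) :=
  ((hf.antitoneOn (Icc a c)).integrableOn_isCompact isCompact_Icc).of_forall_sdiff_eq_zero
    measurableSet_Ioi fun t ht => hc t <| not_le.1 fun htc => ht.2 ⟨le_of_lt ht.1, htc⟩

section Domination

variable {Ω : Type*} [MeasurableSpace Ω] {μ ν : Measure Ω} {W : Ω → ℝ} {yL yU : ℝ}

lemma integral_eq_add_integral_measureReal_lt [IsProbabilityMeasure ν] (hW : Measurable W)
    (hbdd : ∀ᵐ ω ∂ν, W ω ∈ Icc yL yU) :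
    ∫ ω, W ω ∂ν = yL + ∫ t in Ioi 0, ν.real {ω | yL + t < W ω} := by
  have hWint : Integrable W ν := integrable_of_ae_mem_Icc hW.aestronglyMeasurable hbdd
  have hcake := Integrable.integral_eq_integral_meas_lt (f := fun ω => W ω - yL)
    (hWint.sub (integrable_const yL))
    (by filter_upwards [hbdd] with ω hω using sub_nonneg.2 hω.1)
  rw [integral_sub hWint (integrable_const yL), integral_const, probReal_univ, one_smul,
    sub_eq_iff_eq_add'] at hcake
  simpa only [lt_sub_iff_add_lt'] using hcake

lemma le_one_of_dominated [IsProbabilityMeasure μ] [IsProbabilityMeasure ν] {γ : ℝ}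
    (hdom : ∀ s, MeasurableSet s → γ * ν.real s ≤ μ.real s) : γ ≤ 1 := by
  simpa using hdom univ MeasurableSet.univ

lemma absolutelyContinuous_of_dominated [IsFiniteMeasure ν] {γ : ℝ} (hγ : 0 < γ)
    (hdom : ∀ s, MeasurableSet s → γ * ν.real s ≤ μ.real s) : ν ≪ μ :=
  Measure.AbsolutelyContinuous.mk fun s hs hμs => by
    have h := hdom s hs
    rw [measureReal_def μ, hμs, ENNReal.toReal_zero] at h
    exact (measureReal_eq_zero_iff).1
      (le_antisymm (nonpos_of_mul_nonpos_right h hγ) measureReal_nonneg)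

lemma measureReal_lt_eq_zero (hbdd : ∀ᵐ ω ∂ν, W ω ∈ Icc yL yU) {s : ℝ} (hs : yU < s) :
    ν.real {ω | s < W ω} = 0 := by
  rw [measureReal_def, measure_eq_zero_iff_ae_notMem.2, ENNReal.toReal_zero]
  filter_upwards [hbdd] with ω hω using fun h => (hω.2.trans_lt hs).not_gt h

section
variable {γ : ℝ} (hdom : ∀ s, MeasurableSet s → γ * ν.real s ≤ μ.real s) (hW : Measurable W)
include hdom hW

lemma sub_cdfOf_le_mul_measureReal_lt [IsProbabilityMeasure ν] (s : ℝ) :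
    γ - cdfOf μ W s ≤ γ * ν.real {ω | s < W ω} := by
  have hle : MeasurableSet {ω | W ω ≤ s} := hW measurableSet_Iic
  have h := hdom _ hle
  rw [show {ω | s < W ω} = {ω | W ω ≤ s}ᶜ by ext; simp, probReal_compl_eq_one_sub hle]
  change γ * ν.real _ ≤ cdfOf μ W s at h
  linarith

lemma mul_measureReal_lt_le_one_sub_cdfOf [IsProbabilityMeasure μ] (s : ℝ) :
    γ * ν.real {ω | s < W ω} ≤ 1 - cdfOf μ W s := by
  have hle : MeasurableSet {ω | W ω ≤ s} := hW measurableSet_Iic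
  rw [show {ω | s < W ω} = {ω | W ω ≤ s}ᶜ by ext; simp,
    show 1 - cdfOf μ W s = μ.real {ω | W ω ≤ s}ᶜ from (probReal_compl_eq_one_sub hle).symm]
  exact hdom _ hle.compl

end

variable [IsProbabilityMeasure μ] [IsProbabilityMeasure ν] {γ : ℝ} (hγ : 0 < γ)
  (hdom : ∀ s, MeasurableSet s → γ * ν.real s ≤ μ.real s) (hW : Measurable W)
  (hbdd : ∀ᵐ ω ∂μ, W ω ∈ Icc yL yU)
include hγ hdom hW hbdd

theorem lowerTrunc_le_integral_of_dominated :
    lowerTrunc (cdfOf μ W) γ ≤ ∫ ω, W ω ∂ν := by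
  have hbddν := (absolutelyContinuous_of_dominated hγ hdom).ae_le hbdd
  rw [lowerTrunc_cdfOf_eq hW hbdd ⟨hγ, le_one_of_dominated hdom⟩,
    integral_eq_add_integral_measureReal_lt hW hbddν, ← integral_const_mul]
  refine (add_le_add_iff_left yL).2 ?_
  refine integral_mono_of_nonneg (ae_of_all _ fun _ => by positivity) ?_
    (ae_of_all _ fun t => ?_)
  · refine Antitone.integrableOn_Ioi_of_eq_zero (c := yU - yL) ?_ fun t ht => ?_
    · exact fun a b hab => measureReal_mono fun ω (h : yL + b < W ω) =>
        show yL + a < W ω by linarith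
    · exact measureReal_lt_eq_zero hbddν (by linarith)
  · rw [inv_mul_le_iff₀ hγ, max_le_iff]
    exact ⟨sub_cdfOf_le_mul_measureReal_lt hdom hW _, by positivity⟩

theorem integral_le_upperTrunc_of_dominated :
    ∫ ω, W ω ∂ν ≤ upperTrunc (cdfOf μ W) γ := by
  have hbddν := (absolutelyContinuous_of_dominated hγ hdom).ae_le hbdd
  rw [upperTrunc_cdfOf_eq hW hbdd ⟨hγ, le_one_of_dominated hdom⟩,
    integral_eq_add_integral_measureReal_lt hW hbddν, ← integral_const_mul]
  refine (add_le_add_iff_left yL).2 <|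
    integral_mono_of_nonneg (ae_of_all _ fun _ => measureReal_nonneg) ?_
      (ae_of_all _ fun t => ?_)
  · refine Antitone.integrableOn_Ioi_of_eq_zero (c := yU - yL) ?_ fun t ht => ?_
    · exact fun a b hab => mul_le_mul_of_nonneg_left
        (min_le_min_left γ (sub_le_sub_left (monotone_cdfOf (by linarith)) 1)) (by positivity)
    · rw [cdfOf_eq_one_of_le hW hbdd (by linarith), sub_self, min_eq_right hγ.le, mul_zero]
  · rw [le_inv_mul_iff₀ hγ, le_min_iff]
    exact ⟨mul_le_of_le_one_right hγ.le measureReal_le_one,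
      mul_measureReal_lt_le_one_sub_cdfOf hdom hW _⟩

end Domination

section Conditioning

variable {Ω : Type*} {m₁ m₂ : MeasurableSpace Ω} [MeasurableSpace Ω] {μ : Measure Ω}
  {A T E : Set Ω}

lemma measureReal_cond_apply (hA : MeasurableSet A) (s : Set Ω) :
    (μ[|A]).real s = μ.real (A ∩ s) / μ.real A := by
  rw [measureReal_def, cond_apply hA, ENNReal.toReal_mul, ENNReal.toReal_inv, inv_mul_eq_div]
  rfl

lemma mul_measureReal_cond_le [IsFiniteMeasure μ] (hA : MeasurableSet A) {γ : ℝ} (hγ : 0 < γ)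
    (hγA : γ ≤ μ.real A) (s : Set Ω) : γ * (μ[|A]).real s ≤ μ.real s := by
  rw [measureReal_cond_apply hA, mul_div_left_comm]
  calc μ.real (A ∩ s) * (γ / μ.real A) ≤ μ.real s * 1 :=
        mul_le_mul (measureReal_mono inter_subset_right) (div_le_one_of_le₀ hγA measureReal_nonneg)
          (div_nonneg hγ.le measureReal_nonneg) measureReal_nonneg
    _ = μ.real s := mul_one _

lemma cond_inter_apply_of_indep [IsFiniteMeasure μ] (hind : Indep m₁ m₂ μ)
    (hT₁ : MeasurableSet[m₁] T) (hE₂ : MeasurableSet[m₂] E) (hT : MeasurableSet T)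
    (hE : MeasurableSet E) (hE0 : μ E ≠ 0)
    {s : Set Ω} (hs₁ : MeasurableSet[m₁] s) : μ[|T ∩ E] s = μ[|T] s := by
  rw [Indep_iff] at hind
  rw [cond_apply (hT.inter hE), cond_apply hT, inter_right_comm, hind _ _ (hT₁.inter hs₁) hE₂,
    hind _ _ hT₁ hE₂, ENNReal.mul_inv (.inr (measure_ne_top _ _)) (.inr hE0), mul_mul_mul_comm,
    ENNReal.inv_mul_cancel hE0 (measure_ne_top _ _), mul_one]

lemma integral_cond_inter_of_indep [IsFiniteMeasure μ] (hind : Indep m₁ m₂ μ)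
    (hT₁ : MeasurableSet[m₁] T) (hE₂ : MeasurableSet[m₂] E) (hT : MeasurableSet T)
    (hE : MeasurableSet E) (hE0 : μ E ≠ 0)
    {f : Ω → ℝ} (hf₁ : Measurable[m₁] f) (hf : Measurable f) :
    ∫ ω, f ω ∂μ[|T ∩ E] = ∫ ω, f ω ∂μ[|T] := by
  have hmap : (μ[|T ∩ E]).map f = (μ[|T]).map f := Measure.ext fun s hs => by
    rw [Measure.map_apply hf hs, Measure.map_apply hf hs]
    exact cond_inter_apply_of_indep hind hT₁ hE₂ hT hE hE0 (hf₁ hs)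
  calc ∫ ω, f ω ∂μ[|T ∩ E] = ∫ x, x ∂(μ[|T ∩ E]).map f :=
        (integral_map hf.aemeasurable aestronglyMeasurable_id).symm
    _ = ∫ ω, f ω ∂μ[|T] := by
      rw [hmap]
      exact integral_map hf.aemeasurable aestronglyMeasurable_id

end Conditioning

section PotentialOutcomes

variable {Ω : Type*} {K : ℕ} {Y : ℕ → ℕ → Ω → ℝ} {Z D0 D1 : Ω → ℕ}

abbrev potentialOutcomesSigma (K : ℕ) (Y : ℕ → ℕ → Ω → ℝ) (D0 D1 : Ω → ℕ) :
    MeasurableSpace Ω :=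
  (⨆ z ∈ ({0, 1} : Set ℕ), ⨆ d ∈ Set.Icc 1 K, MeasurableSpace.comap (Y z d) inferInstance)
    ⊔ MeasurableSpace.comap D0 inferInstance ⊔ MeasurableSpace.comap D1 inferInstance

lemma measurableSet_responseType_potentialOutcomesSigma (a b : ℕ) :
    MeasurableSet[potentialOutcomesSigma K Y D0 D1] {ω | D0 ω = a ∧ D1 ω = b} :=
  (le_sup_right.trans le_sup_left : MeasurableSpace.comap D0 inferInstance ≤ _) _
      ⟨{a}, measurableSet_singleton a, rfl⟩ |>.inter
    ((le_sup_right : MeasurableSpace.comap D1 inferInstance ≤ _) _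
      ⟨{b}, measurableSet_singleton b, rfl⟩)

lemma measurable_potentialOutcomesSigma {z d : ℕ} (hz : z ≤ 1) (hd1 : 1 ≤ d) (hdK : d ≤ K) :
    Measurable[potentialOutcomesSigma K Y D0 D1] (Y z d) := by
  have hz' : z ∈ ({0, 1} : Set ℕ) := by interval_cases z <;> simp
  refine Measurable.of_comap_le (le_trans ?_ (le_sup_left.trans le_sup_left))
  exact (le_iSup₂_of_le d ⟨hd1, hdK⟩ le_rfl).trans
    (le_iSup₂ (f := fun z (_ : z ∈ ({0, 1} : Set ℕ)) =>
      ⨆ d ∈ Set.Icc 1 K, MeasurableSpace.comap (Y z d) inferInstance) z hz')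

lemma Yreal_eq {z d : ℕ} (hz : z ≤ 1) (hd1 : 1 ≤ d) (hdK : d ≤ K) {ω : Ω} (hZ : Z ω = z)
    (hD : Dreal Z D0 D1 ω = d) : Yreal K Z D0 D1 Y ω = Y z d ω := by
  rw [Yreal, Finset.sum_eq_single_of_mem d (Finset.mem_Icc.2 ⟨hd1, hdK⟩)
    fun j _ hj => by rw [if_neg (hD.trans_ne hj.symm), mul_zero], if_pos hD, mul_one, hZ]
  interval_cases z <;> simp

end PotentialOutcomes

section Model

variable {Ω : Type*} [MeasurableSpace Ω] {P : Measure Ω} {K : ℕ} {Z D0 D1 : Ω → ℕ}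
  {Y : ℕ → ℕ → Ω → ℝ}

lemma measurable_Dreal (hZm : Measurable Z) (hD0m : Measurable D0) (hD1m : Measurable D1) :
    Measurable (Dreal Z D0 D1) :=
  (hD1m.mul hZm).add (hD0m.mul (measurable_const.sub hZm))

lemma measurable_Yreal (hZm : Measurable Z) (hD0m : Measurable D0) (hD1m : Measurable D1)
    (hYm : ∀ z ≤ 1, ∀ d, 1 ≤ d → d ≤ K → Measurable (Y z d)) :
    Measurable (Yreal K Z D0 D1 Y) := by
  refine Finset.measurable_sum _ fun d hd => ?_
  obtain ⟨hd1, hdK⟩ := Finset.mem_Icc.1 hd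
  have hZr : Measurable fun ω => (Z ω : ℝ) := measurable_from_nat.comp hZm
  exact (((hYm 1 le_rfl d hd1 hdK).mul hZr).add ((hYm 0 zero_le_one d hd1 hdK).mul
    (measurable_const.sub hZr))).mul
    (Measurable.ite (measurable_Dreal hZm hD0m hD1m (measurableSet_singleton d))
      measurable_const measurable_const)

lemma propScore_eq_div (hZm : Measurable Z) (d z : ℕ) :
    propScore P Z D0 D1 d z =
      P.real {ω | Dreal Z D0 D1 ω = d ∧ Z ω = z} / P.real {ω | Z ω = z} := by
  have hE : MeasurableSet {ω | Z ω = z} := hZm (measurableSet_singleton z)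
  rw [propScore, ← measureReal_def, measureReal_cond_apply hE]
  simp only [inter_def, mem_ofPred_eq, and_comm]

variable [IsProbabilityMeasure P]

lemma integral_Yreal_cond_inter_eq (hZm : Measurable Z) (hD0m : Measurable D0)
    (hD1m : Measurable D1) (hYm : ∀ z ≤ 1, ∀ d, 1 ≤ d → d ≤ K → Measurable (Y z d))
    (hRCT : RCT P K Y D0 D1 Z) {z d a b : ℕ} (hz : z ≤ 1) (hd1 : 1 ≤ d) (hdK : d ≤ K)
    (hT : ∀ ω, D0 ω = a → D1 ω = b → Z ω = z → Dreal Z D0 D1 ω = d)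
    (hE0 : P {ω | Z ω = z} ≠ 0) :
    ∫ ω, Yreal K Z D0 D1 Y ω ∂P[|{ω | D0 ω = a ∧ D1 ω = b} ∩ {ω | Z ω = z}] =
      ∫ ω, Y z d ω ∂P[|{ω | D0 ω = a ∧ D1 ω = b}] := by
  have hTm : MeasurableSet {ω | D0 ω = a ∧ D1 ω = b} :=
    (hD0m (measurableSet_singleton a)).inter (hD1m (measurableSet_singleton b))
  have hEm : MeasurableSet {ω | Z ω = z} := hZm (measurableSet_singleton z)
  rw [integral_congr_ae <| (ae_cond_mem (hTm.inter hEm)).mono fun ω hω =>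
    Yreal_eq hz hd1 hdK hω.2 (hT ω hω.1.1 hω.1.2 hω.2)]
  exact integral_cond_inter_of_indep hRCT (measurableSet_responseType_potentialOutcomesSigma a b)
    ⟨{z}, measurableSet_singleton z, rfl⟩ hTm hEm hE0
    (measurable_potentialOutcomesSigma hz hd1 hdK) (hYm z hz d hd1 hdK)

theorem lowerTrunc_le_integral_cond_le_upperTrunc
    (hZm : Measurable Z) (hD0m : Measurable D0) (hD1m : Measurable D1)
    (hYm : ∀ z ≤ 1, ∀ d, 1 ≤ d → d ≤ K → Measurable (Y z d))
    (hRCT : RCT P K Y D0 D1 Z) {yL yU : ℝ}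
    (hBdd : ∀ z ≤ 1, ∀ d, 1 ≤ d → d ≤ K → ∀ᵐ ω ∂P, Y z d ω ∈ Icc yL yU)
    {z d a b : ℕ} (hz : z ≤ 1) (hd1 : 1 ≤ d) (hdK : d ≤ K)
    (hT : ∀ ω, D0 ω = a → D1 ω = b → Z ω = z → Dreal Z D0 D1 ω = d)
    (hps : 0 < propScore P Z D0 D1 d z) {γ : ℝ} (hγ : 0 < γ)
    (hγT : γ * propScore P Z D0 D1 d z ≤ P.real {ω | D0 ω = a ∧ D1 ω = b}) :
    lowerTrunc (FYcond P K Z D0 D1 Y d z) γ ≤ ∫ ω, Y z d ω ∂P[|{ω | D0 ω = a ∧ D1 ω = b}] ∧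
      ∫ ω, Y z d ω ∂P[|{ω | D0 ω = a ∧ D1 ω = b}] ≤ upperTrunc (FYcond P K Z D0 D1 Y d z) γ := by
  set T := {ω | D0 ω = a ∧ D1 ω = b}
  set E := {ω | Z ω = z}
  set B := {ω | Dreal Z D0 D1 ω = d ∧ Z ω = z}
  have hTEm : MeasurableSet (T ∩ E) :=
    ((hD0m (measurableSet_singleton a)).inter (hD1m (measurableSet_singleton b))).inter
      (hZm (measurableSet_singleton z))
  have hBm : MeasurableSet B :=
    (measurable_Dreal hZm hD0m hD1m (measurableSet_singleton d)).inter
      (hZm (measurableSet_singleton z))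
  have hTEB : T ∩ E ⊆ B := fun ω ⟨⟨ha, hb⟩, hzω⟩ => ⟨hT ω ha hb hzω, hzω⟩
  rw [propScore_eq_div hZm] at hps hγT
  have hE0 : 0 < P.real E := lt_of_le_of_ne measureReal_nonneg fun h => by
    rw [← h, div_zero] at hps
    exact hps.false
  have hB0 : 0 < P.real B := (div_pos_iff_of_pos_right hE0).1 hps
  have hγA : γ ≤ (P[|B]).real (T ∩ E) := by
    have hindep : P (T ∩ E) = P T * P E := (Indep_iff _ _ _).1 hRCT T E
      (measurableSet_responseType_potentialOutcomesSigma a b)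
      ⟨{z}, measurableSet_singleton z, rfl⟩
    rw [measureReal_cond_apply hBm, inter_eq_right.2 hTEB, le_div_iff₀ hB0,
      measureReal_def P (T ∩ E), hindep, ENNReal.toReal_mul, ← measureReal_def, ← measureReal_def]
    rwa [mul_div_assoc', div_le_iff₀ hE0] at hγT
  have := cond_isProbabilityMeasure (μ := P) (ENNReal.toReal_pos_iff.1 hB0).1.ne'
  have := cond_isProbabilityMeasure (μ := P[|B])
    (ENNReal.toReal_pos_iff.1 (hγ.trans_le hγA)).1.ne'
  have hdom (s : Set Ω) (_ : MeasurableSet s) := mul_measureReal_cond_le hTEm hγ hγA s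
  have hbdd : ∀ᵐ ω ∂P[|B], Yreal K Z D0 D1 Y ω ∈ Icc yL yU := by
    filter_upwards [ae_cond_mem hBm, cond_absolutelyContinuous.ae_le (hBdd z hz d hd1 hdK)]
      with ω hωB hω
    rwa [Yreal_eq hz hd1 hdK hωB.2 hωB.1]
  have hmid : ∫ ω, Yreal K Z D0 D1 Y ω ∂P[|B][|T ∩ E] = ∫ ω, Y z d ω ∂P[|T] := by
    rw [cond_cond_eq_cond_inter hBm hTEm, inter_eq_right.2 hTEB]
    exact integral_Yreal_cond_inter_eq hZm hD0m hD1m hYm hRCT hz hd1 hdK hT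
      (ENNReal.toReal_pos_iff.1 hE0).1.ne'
  have hW := measurable_Yreal hZm hD0m hD1m hYm
  rw [← hmid]
  exact ⟨lowerTrunc_le_integral_of_dominated hγ hdom hW hbdd,
    integral_le_upperTrunc_of_dominated hγ hdom hW hbdd⟩

end Model

theorem lcie_bounds_responseType {Ω : Type*} [MeasurableSpace Ω] {P : Measure Ω}
    [IsProbabilityMeasure P] {K : ℕ} {Z D0 D1 : Ω → ℕ} {Y : ℕ → ℕ → Ω → ℝ}
    (hZm : Measurable Z) (hD0m : Measurable D0) (hD1m : Measurable D1)
    (hYm : ∀ z ≤ 1, ∀ d, 1 ≤ d → d ≤ K → Measurable (Y z d))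
    (hRCT : RCT P K Y D0 D1 Z) {yL yU : ℝ}
    (hBdd : ∀ z ≤ 1, ∀ d, 1 ≤ d → d ≤ K → ∀ᵐ ω ∂P, Y z d ω ∈ Icc yL yU)
    {z d d' a b : ℕ} (hz : z ≤ 1) (hd1 : 1 ≤ d) (hdK : d ≤ K) (hd'1 : 1 ≤ d') (hd'K : d' ≤ K)
    (hT : ∀ ω, D0 ω = a → D1 ω = b → Z ω = z → Dreal Z D0 D1 ω = d)
    (hps : 0 < propScore P Z D0 D1 d z) {γ : ℝ} (hγ : 0 < γ)
    (hγT : γ * propScore P Z D0 D1 d z ≤ P.real {ω | D0 ω = a ∧ D1 ω = b}) :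
    lowerTrunc (FYcond P K Z D0 D1 Y d z) γ - yU
        ≤ ∫ ω, (Y z d ω - Y z d' ω) ∂P[|{ω | D0 ω = a ∧ D1 ω = b}] ∧
      ∫ ω, (Y z d ω - Y z d' ω) ∂P[|{ω | D0 ω = a ∧ D1 ω = b}]
        ≤ upperTrunc (FYcond P K Z D0 D1 Y d z) γ - yL := by
  have hT0 : P {ω | D0 ω = a ∧ D1 ω = b} ≠ 0 := fun h => by
    rw [measureReal_def, h, ENNReal.toReal_zero] at hγT
    exact (mul_pos hγ hps).not_ge hγT
  have := cond_isProbabilityMeasure hT0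
  have hbdd (e : ℕ) (he1 : 1 ≤ e) (heK : e ≤ K) :
      ∀ᵐ ω ∂P[|{ω | D0 ω = a ∧ D1 ω = b}], Y z e ω ∈ Icc yL yU :=
    cond_absolutelyContinuous.ae_le (hBdd z hz e he1 heK)
  have hint (e : ℕ) (he1 : 1 ≤ e) (heK : e ≤ K) :=
    integrable_of_ae_mem_Icc (hYm z hz e he1 heK).aestronglyMeasurable (hbdd e he1 heK)
  have hd' := integral_mem_Icc_of_ae_mem_Icc (hYm z hz d' hd'1 hd'K).aestronglyMeasurable
    (hbdd d' hd'1 hd'K)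
  obtain ⟨hlow, hupp⟩ :=
    lowerTrunc_le_integral_cond_le_upperTrunc hZm hD0m hD1m hYm hRCT hBdd hz hd1 hdK hT hps hγ hγT
  rw [integral_sub (hint d hd1 hdK) (hint d' hd'1 hd'K)]
  exact ⟨by linarith [hd'.2], by linarith [hd'.1]⟩

lemma pbar_le_of_mem_ThetaI {Ω : Type*} [MeasurableSpace Ω] {P : Measure Ω} {K : ℕ}
    {Z D0 D1 : Ω → ℕ} {R : (ℕ × ℕ → ℝ) → Prop} {p : ℕ × ℕ → ℝ} (hp : p ∈ ThetaI P K Z D0 D1 R)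
    {t : ℕ × ℕ} (ht1 : t.1 ≤ K) (ht2 : t.2 ≤ K) : pbar P K Z D0 D1 R t ≤ p t := by
  refine csInf_le ⟨0, ?_⟩ ⟨p, hp, rfl⟩
  rintro _ ⟨q, hq, rfl⟩
  exact hq.1 t (Finset.mem_product.2 ⟨Finset.mem_range.2 (by omega), Finset.mem_range.2 (by omega)⟩)

theorem multilayered_bounds_lcie_general
    {Ω : Type*} [MeasurableSpace Ω] (P : Measure Ω) [IsProbabilityMeasure P]
    (K : ℕ)
    (Z D0 D1 : Ω → ℕ)
    (hZm : Measurable Z) (hD0m : Measurable D0) (hD1m : Measurable D1)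
    (Y : ℕ → ℕ → Ω → ℝ)
    (hYm : ∀ z ≤ 1, ∀ d, 1 ≤ d → d ≤ K → Measurable (Y z d))
    (hRCT : RCT P K Y D0 D1 Z)
    (R : (ℕ × ℕ → ℝ) → Prop)
    (hTrue : (fun t : ℕ × ℕ => (P {ω | D0 ω = t.1 ∧ D1 ω = t.2}).toReal)
        ∈ ThetaI P K Z D0 D1 R)
    (yL yU : ℝ)
    (hBdd : ∀ z ≤ 1, ∀ d, 1 ≤ d → d ≤ K → ∀ᵐ ω ∂P, Y z d ω ∈ Set.Icc yL yU)
    (d d' l : ℕ) (hd1 : 1 ≤ d) (hdK : d ≤ K) (hd'1 : 1 ≤ d') (hd'K : d' ≤ K)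
    (hlK : l ≤ K) :
    ((0 < P {ω | D0 ω = l ∧ D1 ω = d} →
        0 < propScore P Z D0 D1 d 1 →
        0 < pbar P K Z D0 D1 R (l, d) / propScore P Z D0 D1 d 1 →
      (lowerTrunc (FYcond P K Z D0 D1 Y d 1)
            (pbar P K Z D0 D1 R (l, d) / propScore P Z D0 D1 d 1) - yU
          ≤ ∫ ω, (Y 1 d ω - Y 1 d' ω) ∂(P[|{ω | D0 ω = l ∧ D1 ω = d}]))
        ∧ (∫ ω, (Y 1 d ω - Y 1 d' ω) ∂(P[|{ω | D0 ω = l ∧ D1 ω = d}])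
          ≤ upperTrunc (FYcond P K Z D0 D1 Y d 1)
              (pbar P K Z D0 D1 R (l, d) / propScore P Z D0 D1 d 1) - yL)))
    ∧ ((0 < P {ω | D0 ω = d ∧ D1 ω = l} →
        0 < propScore P Z D0 D1 d 0 →
        0 < pbar P K Z D0 D1 R (d, l) / propScore P Z D0 D1 d 0 →
      (lowerTrunc (FYcond P K Z D0 D1 Y d 0)
            (pbar P K Z D0 D1 R (d, l) / propScore P Z D0 D1 d 0) - yU
          ≤ ∫ ω, (Y 0 d ω - Y 0 d' ω) ∂(P[|{ω | D0 ω = d ∧ D1 ω = l}]))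
        ∧ (∫ ω, (Y 0 d ω - Y 0 d' ω) ∂(P[|{ω | D0 ω = d ∧ D1 ω = l}])
          ≤ upperTrunc (FYcond P K Z D0 D1 Y d 0)
              (pbar P K Z D0 D1 R (d, l) / propScore P Z D0 D1 d 0) - yL))) := by
  refine ⟨fun _ hps hγ => ?_, fun _ hps hγ => ?_⟩
  · refine lcie_bounds_responseType hZm hD0m hD1m hYm hRCT hBdd le_rfl hd1 hdK hd'1 hd'K
      (fun ω _ hD1 hZ => by simp [Dreal, hZ, hD1]) hps hγ ?_
    rw [div_mul_cancel₀ _ hps.ne']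
    exact pbar_le_of_mem_ThetaI hTrue hlK hdK
  · refine lcie_bounds_responseType hZm hD0m hD1m hYm hRCT hBdd zero_le_one hd1 hdK hd'1 hd'K
      (fun ω hD0 _ hZ => by simp [Dreal, hZ, hD0]) hps hγ ?_
    rw [div_mul_cancel₀ _ hps.ne']
    exact pbar_le_of_mem_ThetaI hTrue hdK hlK

/-- validity of the multilayered bounds for the local controlled
indirect effect: under Assumption RCT, if the true response-type probability
vector lies in `Θ_I(R)` and the potential outcomes are supported in
`[y_L, y_U]`, then the LCIEs are bounded as stated. -/
theorem multilayered_bounds_lcie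
    {Ω : Type*} [MeasurableSpace Ω] (P : Measure Ω) [IsProbabilityMeasure P]
    (K : ℕ) (hK : 1 ≤ K)
    (Z D0 D1 : Ω → ℕ)
    (hZm : Measurable Z) (hD0m : Measurable D0) (hD1m : Measurable D1)
    (hZ01 : ∀ ω, Z ω ≤ 1) (hD0K : ∀ ω, D0 ω ≤ K) (hD1K : ∀ ω, D1 ω ≤ K)
    (hZpos : 0 < P {ω | Z ω = 1}) (hZlt : P {ω | Z ω = 1} < 1)
    (Y : ℕ → ℕ → Ω → ℝ)
    (hYm : ∀ z ≤ 1, ∀ d, 1 ≤ d → d ≤ K → Measurable (Y z d))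
    (hYint : ∀ z ≤ 1, ∀ d, 1 ≤ d → d ≤ K → Integrable (Y z d) P)
    (hRCT : RCT P K Y D0 D1 Z)
    (R : (ℕ × ℕ → ℝ) → Prop)
    (hTrue : (fun t : ℕ × ℕ => (P {ω | D0 ω = t.1 ∧ D1 ω = t.2}).toReal)
        ∈ ThetaI P K Z D0 D1 R)
    (yL yU : ℝ) (hyLU : yL ≤ yU)
    (hBdd : ∀ z ≤ 1, ∀ d, 1 ≤ d → d ≤ K → ∀ᵐ ω ∂P, Y z d ω ∈ Set.Icc yL yU)
    (d d' l : ℕ) (hd1 : 1 ≤ d) (hdK : d ≤ K) (hd'1 : 1 ≤ d') (hd'K : d' ≤ K)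
    (hdd' : d ≠ d') (hl1 : 1 ≤ l) (hlK : l ≤ K) :
    ((0 < P {ω | D0 ω = l ∧ D1 ω = d} →
        0 < propScore P Z D0 D1 d 1 →
        0 < pbar P K Z D0 D1 R (l, d) / propScore P Z D0 D1 d 1 →
      (lowerTrunc (FYcond P K Z D0 D1 Y d 1)
            (pbar P K Z D0 D1 R (l, d) / propScore P Z D0 D1 d 1) - yU
          ≤ ∫ ω, (Y 1 d ω - Y 1 d' ω) ∂(P[|{ω | D0 ω = l ∧ D1 ω = d}]))
        ∧ (∫ ω, (Y 1 d ω - Y 1 d' ω) ∂(P[|{ω | D0 ω = l ∧ D1 ω = d}])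
          ≤ upperTrunc (FYcond P K Z D0 D1 Y d 1)
              (pbar P K Z D0 D1 R (l, d) / propScore P Z D0 D1 d 1) - yL)))
    ∧ ((0 < P {ω | D0 ω = d ∧ D1 ω = l} →
        0 < propScore P Z D0 D1 d 0 →
        0 < pbar P K Z D0 D1 R (d, l) / propScore P Z D0 D1 d 0 →
      (lowerTrunc (FYcond P K Z D0 D1 Y d 0)
            (pbar P K Z D0 D1 R (d, l) / propScore P Z D0 D1 d 0) - yU
          ≤ ∫ ω, (Y 0 d ω - Y 0 d' ω) ∂(P[|{ω | D0 ω = d ∧ D1 ω = l}]))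
        ∧ (∫ ω, (Y 0 d ω - Y 0 d' ω) ∂(P[|{ω | D0 ω = d ∧ D1 ω = l}])
          ≤ upperTrunc (FYcond P K Z D0 D1 Y d 0)
              (pbar P K Z D0 D1 R (d, l) / propScore P Z D0 D1 d 0) - yL))) :=
  multilayered_bounds_lcie_general P K Z D0 D1 hZm hD0m hD1m Y hYm hRCT R hTrue yL yU hBdd d d' l
    hd1 hdK hd'1 hd'K hlK
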